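/- arXiv:2402.12235 — 3 statements merged into one kernel-verified Lean document; each statement's English description precedes it below -/
import Mathlib

section
/- For finite random variables X and Z with joint distribution P_{X,Z}, the maximal leakage L(X → Z), defined as the supremum over all random variables S satisfying the Markov chain S − X − Z of log(Pr[S = Ŝ(Z)] / Pr[S = Ŝ]) (where Ŝ(Z) is the Bayes-optimal guess of S from Z and Ŝ the Bayes-optimal constant guess), equals log(∑_{z} max_{x : P_X(x)>0} P_{Z|X}(z|x)). -/
open scoped BigOperators
noncomputable section

/-- A joint pmf on a pair of finite alphabets. -/
def IsJointPMF2 {X Z : Type} [Fintype X] [Fintype Z] (p : X → Z → ℝ) : Prop :=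
  (∀ x z, 0 ≤ p x z) ∧ ∑ x, ∑ z, p x z = 1

/-- A joint pmf on a triple of finite alphabets. -/
def IsJointPMF3 {S X Z : Type} [Fintype S] [Fintype X] [Fintype Z] (q : S → X → Z → ℝ) : Prop :=
  (∀ s x z, 0 ≤ q s x z) ∧ ∑ s, ∑ x, ∑ z, q s x z = 1

/-- Markov chain S − X − Z: S and Z are conditionally independent given X. -/
def MarkovSXZ {S X Z : Type} [Fintype S] [Fintype Z] (q : S → X → Z → ℝ) : Prop :=
  ∀ s x z, q s x z * (∑ s', ∑ z', q s' x z') = (∑ z', q s x z') * (∑ s', q s' x z)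

/-- Pr[S = Ŝ(Z)]: probability of the Bayes-optimal guess of S from Z
(supremum over all estimators g : Z → S). -/
def bayesGuessProb {S Z : Type} [Fintype S] [Fintype Z] (q : S → Z → ℝ) : ℝ :=
  ⨆ g : Z → S, ∑ z, q (g z) z

/-- Pr[S = Ŝ]: probability of the Bayes-optimal constant guess of S. -/
def baselineProb {S Z : Type} [Fintype S] [Fintype Z] (q : S → Z → ℝ) : ℝ :=
  ⨆ s : S, ∑ z, q s z

/-- The inference gain I_∞(S; Z) = log₂(Pr[S = Ŝ(Z)] / Pr[S = Ŝ]). -/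
def infGain {S Z : Type} [Fintype S] [Fintype Z] (q : S → Z → ℝ) : ℝ :=
  Real.logb 2 (bayesGuessProb q / baselineProb q)

/-- Closed form of maximal leakage: log₂(∑_z max_x P_{Z|X}(z|x)).
(For x outside the support of P_X the conditional P_{Z|X}(·|x) is 0/0 = 0,
so the max over all x equals the max over the support of P_X.) -/
def maxLeak {X Z : Type} [Fintype X] [Fintype Z] [Nonempty X] (p : X → Z → ℝ) : ℝ :=
  Real.logb 2 (∑ z, Finset.univ.sup' Finset.univ_nonempty fun x => p x z / ∑ z', p x z')


section Helpers
open Finset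

lemma my_ciSup_eq_sup' {ι : Type*} [Fintype ι] [Nonempty ι] (f : ι → ℝ) :
    (⨆ i, f i) = Finset.univ.sup' Finset.univ_nonempty f :=
  le_antisymm (ciSup_le fun i => Finset.le_sup' f (Finset.mem_univ i))
    (Finset.sup'_le _ _ fun i _ => le_ciSup (Set.finite_range f).bddAbove i)

lemma bayesGuessProb_eq_sum_sup {S Z : Type} [Fintype S] [Fintype Z] [Nonempty S] [Nonempty Z]
    (q : S → Z → ℝ) :
    bayesGuessProb q = ∑ z, Finset.univ.sup' Finset.univ_nonempty (fun s => q s z) := by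
  letI : Fintype (Z → S) := Fintype.ofFinite _
  rw [bayesGuessProb, my_ciSup_eq_sup']
  apply le_antisymm
  · exact Finset.sup'_le _ _ fun g _ => Finset.sum_le_sum fun z _ =>
      Finset.le_sup' (fun s => q s z) (mem_univ (g z))
  · have h : ∀ z : Z, ∃ s : S, Finset.univ.sup' Finset.univ_nonempty (fun s => q s z) = q s z := by
      intro z
      obtain ⟨s, _, hs⟩ := Finset.exists_mem_eq_sup' univ_nonempty (fun s => q s z)
      exact ⟨s, hs⟩
    calc ∑ z, Finset.univ.sup' Finset.univ_nonempty (fun s => q s z)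
        = ∑ z, q ((h z).choose) z := Finset.sum_congr rfl fun z _ => (h z).choose_spec
      _ ≤ _ := Finset.le_sup' (fun g : Z → S => ∑ z, q (g z) z) (mem_univ _)

lemma baselineProb_eq_sup {S Z : Type} [Fintype S] [Fintype Z] [Nonempty S]
    (q : S → Z → ℝ) :
    baselineProb q = Finset.univ.sup' Finset.univ_nonempty (fun s => ∑ z, q s z) :=
  my_ciSup_eq_sup' _

lemma my_sup'_reindex {S T : Type} [Fintype S] [Fintype T] [Nonempty S] [Nonempty T]
    (e : S ≃ T) (f : T → ℝ) :
    Finset.univ.sup' Finset.univ_nonempty (fun s => f (e s))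
      = Finset.univ.sup' Finset.univ_nonempty f :=
  le_antisymm (Finset.sup'_le _ _ fun s _ => Finset.le_sup' f (mem_univ _))
    (Finset.sup'_le _ _ fun t _ => by
      have h := Finset.le_sup' (fun s => f (e s)) (mem_univ (e.symm t))
      simp only [Equiv.apply_symm_apply] at h
      exact h)

lemma infGain_reindex {S T Z : Type} [Fintype S] [Fintype T] [Fintype Z]
    [Nonempty S] [Nonempty T] [Nonempty Z] (e : S ≃ T) (q : T → Z → ℝ) :
    infGain (fun s z => q (e s) z) = infGain q := by
  rw [infGain, infGain, bayesGuessProb_eq_sum_sup, bayesGuessProb_eq_sum_sup,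
    baselineProb_eq_sup, baselineProb_eq_sup]
  rw [my_sup'_reindex e (fun t => ∑ z, q t z)]
  congr 2
  exact Finset.sum_congr rfl fun z _ => my_sup'_reindex e (fun t => q t z)

section UB
variable {X Z : Type} [Fintype X] [Fintype Z] [Nonempty X] [Nonempty Z]
variable (p : X → Z → ℝ)
variable {S : Type} [Fintype S] [Nonempty S] (q : S → X → Z → ℝ)

lemma key_bound (hp : IsJointPMF2 p) (hq : IsJointPMF3 q) (hm : MarkovSXZ q)
    (hmarg : ∀ x z, ∑ s, q s x z = p x z) :
    (∑ z, Finset.univ.sup' Finset.univ_nonempty (fun s => ∑ x, q s x z))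
      ≤ (∑ z, Finset.univ.sup' Finset.univ_nonempty (fun x => p x z / ∑ z', p x z'))
        * Finset.univ.sup' Finset.univ_nonempty (fun s => ∑ z, ∑ x, q s x z) := by
  set pX : X → ℝ := fun x => ∑ z, p x z with hpX
  have hq0 := hq.1
  have hp0 := hp.1
  have hSX : ∀ x, ∑ s, ∑ z, q s x z = pX x := by
    intro x
    rw [Finset.sum_comm]
    simp only [hmarg, hpX]
  have hpXnn : ∀ x, 0 ≤ pX x := fun x => Finset.sum_nonneg fun z _ => hp0 x z
  have hzero : ∀ x, pX x = 0 → ∀ s z, q s x z = 0 := by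
    intro x hx s z
    have h1 : ∑ s, ∑ z, q s x z = 0 := (hSX x).trans hx
    have h2 : ∀ s ∈ univ, (0:ℝ) ≤ ∑ z, q s x z :=
      fun s _ => Finset.sum_nonneg fun z _ => hq0 s x z
    have h3 : ∑ z, q s x z = 0 :=
      (Finset.sum_eq_zero_iff_of_nonneg h2).mp h1 s (mem_univ s)
    exact (Finset.sum_eq_zero_iff_of_nonneg (fun z _ => hq0 s x z)).mp h3 z (mem_univ z)
  have hkey : ∀ s x z, q s x z ≤ (∑ z', q s x z') * (p x z / pX x) := by
    intro s x z
    rcases eq_or_lt_of_le (hpXnn x) with h | h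
    · have hpz : p x z = 0 := by
        have := (Finset.sum_eq_zero_iff_of_nonneg (fun z _ => hp0 x z)).mp h.symm z (mem_univ z)
        exact this
      rw [hzero x h.symm s z, hpz]
      simp
    · have hmk := hm s x z
      rw [hSX] at hmk
      rw [hmarg] at hmk
      rw [← mul_div_assoc, le_div_iff₀ h]
      exact hmk.le
  set supc : Z → ℝ := fun z => Finset.univ.sup' Finset.univ_nonempty (fun x => p x z / pX x)
    with hsupc
  have hsupc_nn : ∀ z, 0 ≤ supc z := by
    intro z
    obtain ⟨x⟩ := ‹Nonempty X›
    refine le_trans ?_ (Finset.le_sup' (fun x => p x z / pX x) (mem_univ x))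
    exact div_nonneg (hp0 x z) (hpXnn x)
  set B : ℝ := Finset.univ.sup' Finset.univ_nonempty (fun s => ∑ z, ∑ x, q s x z) with hB
  have hQS : ∀ s, ∑ z, ∑ x, q s x z ≤ B := fun s =>
    Finset.le_sup' (fun s => ∑ z, ∑ x, q s x z) (mem_univ s)
  have hmain : ∀ s z, ∑ x, q s x z ≤ supc z * B := by
    intro s z
    calc ∑ x, q s x z ≤ ∑ x, (∑ z', q s x z') * supc z := by
          refine Finset.sum_le_sum fun x _ => le_trans (hkey s x z) ?_
          refine mul_le_mul_of_nonneg_left ?_ (Finset.sum_nonneg fun z' _ => hq0 s x z')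
          exact Finset.le_sup' (fun x => p x z / pX x) (mem_univ x)
      _ = (∑ x, ∑ z', q s x z') * supc z := by rw [Finset.sum_mul]
      _ ≤ B * supc z := by
          refine mul_le_mul_of_nonneg_right ?_ (hsupc_nn z)
          rw [Finset.sum_comm]; exact hQS s
      _ = supc z * B := mul_comm _ _
  calc ∑ z, Finset.univ.sup' Finset.univ_nonempty (fun s => ∑ x, q s x z)
      ≤ ∑ z, supc z * B := by
        refine Finset.sum_le_sum fun z _ => ?_
        exact Finset.sup'_le _ _ fun s _ => hmain s z
    _ = (∑ z, supc z) * B := by rw [Finset.sum_mul]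

lemma upper (hp : IsJointPMF2 p) (hq : IsJointPMF3 q) (hm : MarkovSXZ q)
    (hmarg : ∀ x z, ∑ s, q s x z = p x z) :
    infGain (fun s z => ∑ x, q s x z) ≤ maxLeak p := by
  have hq0 := hq.1
  rw [infGain, maxLeak, bayesGuessProb_eq_sum_sup, baselineProb_eq_sup]
  set G : ℝ := ∑ z, Finset.univ.sup' Finset.univ_nonempty (fun s => ∑ x, q s x z) with hG
  set B : ℝ := Finset.univ.sup' Finset.univ_nonempty (fun s => ∑ z, ∑ x, q s x z) with hB
  set L : ℝ := ∑ z, Finset.univ.sup' Finset.univ_nonempty (fun x => p x z / ∑ z', p x z')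
    with hL
  have hGL : G ≤ L * B := key_bound p q hp hq hm hmarg
  have hBpos : 0 < B := by
    have hsum1 : ∑ s, ∑ z, ∑ x, q s x z = 1 := by
      rw [← hq.2]
      exact Finset.sum_congr rfl fun s _ => Finset.sum_comm
    have : ∃ s ∈ (univ : Finset S), (0:ℝ) < ∑ z, ∑ x, q s x z := by
      by_contra hcon
      push_neg at hcon
      have : ∑ s, ∑ z, ∑ x, q s x z ≤ 0 :=
        Finset.sum_nonpos fun s hs => hcon s hs
      linarith
    obtain ⟨s, hs, hspos⟩ := this
    exact lt_of_lt_of_le hspos (Finset.le_sup' (fun s => ∑ z, ∑ x, q s x z) hs)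
  have hBG : B ≤ G := by
    refine Finset.sup'_le _ _ fun s _ => ?_
    exact Finset.sum_le_sum fun z _ => Finset.le_sup' (fun s => ∑ x, q s x z) (mem_univ s)
  have hGpos : 0 < G := lt_of_lt_of_le hBpos hBG
  refine Real.logb_le_logb_of_le (by norm_num) (div_pos hGpos hBpos) ?_
  rw [div_le_iff₀ hBpos]
  exact hGL
end UB

lemma achieve {X Z : Type} [Fintype X] [Fintype Z] [Nonempty X] [Nonempty Z]
    (p : X → Z → ℝ) (hp : IsJointPMF2 p) :
    ∃ (n : ℕ) (_ : 0 < n) (q : Fin n → X → Z → ℝ),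
        IsJointPMF3 q ∧ MarkovSXZ q ∧ (∀ x z, ∑ s, q s x z = p x z) ∧
        infGain (fun s z => ∑ x, q s x z) = maxLeak p := by
  classical
  classical
  have hp0 := hp.1
  set pX : X → ℝ := fun x => ∑ z, p x z with hpXdef
  have hpXnn : ∀ x, 0 ≤ pX x := fun x => Finset.sum_nonneg fun z _ => hp0 x z
  have hpX1 : ∑ x, pX x = 1 := hp.2
  have hpXle1 : ∀ x, pX x ≤ 1 := by
    intro x
    rw [← hpX1]
    exact Finset.single_le_sum (fun x _ => hpXnn x) (mem_univ x)
  have hpz0 : ∀ x, pX x = 0 → ∀ z, p x z = 0 := by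
    intro x hx z
    exact (Finset.sum_eq_zero_iff_of_nonneg (fun z _ => hp0 x z)).mp hx z (mem_univ z)
  -- support
  have hex : ∃ x ∈ (univ : Finset X), 0 < pX x := by
    by_contra hcon
    push_neg at hcon
    have : ∑ x, pX x ≤ 0 := Finset.sum_nonpos fun x hx => hcon x hx
    linarith
  obtain ⟨x₀, _, hx₀⟩ := hex
  set supp : Finset X := univ.filter (fun x => 0 < pX x) with hsuppdef
  have hsne : supp.Nonempty := ⟨x₀, mem_filter.mpr ⟨mem_univ _, hx₀⟩⟩
  set α : ℝ := supp.inf' hsne pX with hαdef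
  have hα : 0 < α := (Finset.lt_inf'_iff hsne).mpr fun x hx => (mem_filter.mp hx).2
  have hαle : ∀ x, 0 < pX x → α ≤ pX x := fun x h =>
    Finset.inf'_le pX (mem_filter.mpr ⟨mem_univ _, h⟩)
  set N : ℕ := ⌈1/α⌉₊ with hNdef
  have hNpos : 0 < N := Nat.ceil_pos.mpr (by positivity)
  have hNα : 1/(N:ℝ) ≤ α := by
    have h1 : 1/α ≤ (N:ℝ) := Nat.le_ceil _
    have h2 : (1:ℝ)/(N:ℝ) ≤ 1/(1/α) :=
      one_div_le_one_div_of_le (by positivity) h1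
    rwa [one_div_one_div] at h2
  -- weights
  set w : Fin (N+1) → X → ℝ := fun i x => if i = 0 then min α (pX x)
      else (pX x - min α (pX x))/N with hwdef
  have hw_nn : ∀ i x, 0 ≤ w i x := by
    intro i x
    by_cases h : i = 0
    · simp only [hwdef, h, reduceIte]
      exact le_min hα.le (hpXnn x)
    · simp only [hwdef, h, if_false]
      have h2 : 0 ≤ pX x - min α (pX x) := by
        have := min_le_right α (pX x); linarith
      positivity
  have hw_le : ∀ i x, w i x ≤ α := by
    intro i x
    by_cases h : i = 0
    · simp only [hwdef, h, if_true, reduceIte]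
      exact min_le_left _ _
    · simp only [hwdef, h, if_false, reduceIte]
      refine le_trans ?_ hNα
      rw [div_le_div_iff₀ (by positivity) (by positivity)]
      have h1 : pX x - min α (pX x) ≤ 1 := by
        have := hpXle1 x
        have h2 : 0 ≤ min α (pX x) := le_min hα.le (hpXnn x)
        linarith
      nlinarith
  have hwsum : ∀ x, ∑ i, w i x = pX x := by
    intro x
    rw [Fin.sum_univ_succ]
    simp only [hwdef, if_true, reduceIte, Fin.succ_ne_zero, if_false]
    rw [Finset.sum_const, Finset.card_univ, Fintype.card_fin, nsmul_eq_mul]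
    have hN0 : (N:ℝ) ≠ 0 := Nat.cast_ne_zero.mpr hNpos.ne'
    field_simp
    ring
  -- the construction
  set q' : (X × Fin (N+1)) → X → Z → ℝ :=
      fun s x z => if s.1 = x then w s.2 x * (p x z / pX x) else 0 with hq'def
  have hq'nn : ∀ s x z, 0 ≤ q' s x z := by
    intro s x z
    simp only [hq'def]
    split
    · exact mul_nonneg (hw_nn _ _) (div_nonneg (hp0 x z) (hpXnn x))
    · exact le_refl 0
  have hcond1 : ∀ x, 0 < pX x → ∑ z, p x z / pX x = 1 := by
    intro x h
    rw [← Finset.sum_div]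
    exact div_self h.ne'
  have hmargq : ∀ x z, ∑ s : X × Fin (N+1), q' s x z = p x z := by
    intro x z
    rw [Fintype.sum_prod_type]
    have hinner : ∀ x', (∑ i, q' (x', i) x z)
        = if x' = x then pX x * (p x z / pX x) else 0 := by
      intro x'
      by_cases h : x' = x
      · simp only [hq'def, h, if_true, reduceIte, ← Finset.sum_mul, hwsum]
      · simp [hq'def, h]
    simp only [hinner]
    rw [Finset.sum_ite_eq' univ x (fun _ => pX x * (p x z / pX x))]
    simp only [mem_univ, if_true]
    rcases eq_or_lt_of_le (hpXnn x) with h | h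
    · rw [hpz0 x h.symm z]; simp
    · rw [mul_div_cancel₀ _ h.ne']
  have hq'pmf : IsJointPMF3 q' := by
    refine ⟨hq'nn, ?_⟩
    rw [Finset.sum_comm]
    calc ∑ x, ∑ s : X × Fin (N+1), ∑ z, q' s x z
        = ∑ x, ∑ z, ∑ s : X × Fin (N+1), q' s x z :=
          Finset.sum_congr rfl fun x _ => Finset.sum_comm
      _ = ∑ x, ∑ z, p x z := by simp only [hmargq]
      _ = 1 := hp.2
  have hsums : ∀ x, ∑ s : X × Fin (N+1), ∑ z', q' s x z' = pX x := by
    intro x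
    rw [Finset.sum_comm]
    simp only [hmargq]
    rfl
  have hq'markov : MarkovSXZ q' := by
    intro s x z
    rw [hsums, hmargq]
    rcases eq_or_lt_of_le (hpXnn x) with h | h
    · have h0 : p x z = 0 := hpz0 x h.symm z
      rw [← h, h0]
      ring
    · by_cases hs : s.1 = x
      · have hval : ∀ z', q' s x z' = w s.2 x * (p x z' / pX x) := by
          intro z'; simp [hq'def, hs]
        simp only [hval]
        rw [← Finset.mul_sum, hcond1 x h, mul_one]
        field_simp
      · have hval : ∀ z', q' s x z' = 0 := by intro z'; simp [hq'def, hs]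
        simp [hval]
  -- compute the joint distribution of (S', Z)
  have hQ : ∀ (x' : X) (i : Fin (N+1)) (z : Z),
      (∑ x, q' (x', i) x z) = w i x' * (p x' z / pX x') := by
    intro x' i z
    rw [Finset.sum_ite_eq univ x' (fun x => w i x * (p x z / pX x))]
    simp
  set supc : Z → ℝ := fun z => Finset.univ.sup' Finset.univ_nonempty (fun x => p x z / pX x)
    with hsupcdef
  have hc_nn : ∀ x z, 0 ≤ p x z / pX x := fun x z => div_nonneg (hp0 x z) (hpXnn x)
  have hc0 : ∀ x z, pX x = 0 → p x z / pX x = 0 := by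
    intro x z h
    rw [hpz0 x h z]
    simp
  have hsupQ : ∀ z, Finset.univ.sup' Finset.univ_nonempty
      (fun s : X × Fin (N+1) => ∑ x, q' s x z) = α * supc z := by
    intro z
    apply le_antisymm
    · refine Finset.sup'_le _ _ fun s _ => ?_
      rw [show (∑ x, q' s x z) = w s.2 s.1 * (p s.1 z / pX s.1) from hQ s.1 s.2 z]
      refine mul_le_mul (hw_le s.2 s.1)
        (Finset.le_sup' (fun x => p x z / pX x) (mem_univ s.1)) (hc_nn s.1 z) hα.le
    · obtain ⟨xm, _, hxm⟩ := Finset.exists_mem_eq_sup' Finset.univ_nonempty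
        (fun x => p x z / pX x)
      rcases eq_or_lt_of_le (hpXnn xm) with h | h
      · have hsz : supc z = p xm z / pX xm := hxm
        have : supc z = 0 := by rw [hsz]; exact hc0 xm z h.symm
        rw [this, mul_zero]
        refine le_trans ?_ (Finset.le_sup'
          (fun s : X × Fin (N+1) => ∑ x, q' s x z) (mem_univ (xm, 0)))
        rw [hQ xm 0 z]
        exact mul_nonneg (hw_nn _ _) (hc_nn xm z)
      · refine le_trans ?_ (Finset.le_sup'
          (fun s : X × Fin (N+1) => ∑ x, q' s x z) (mem_univ (xm, 0)))
        rw [hQ xm 0 z]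
        have hmin : w (0 : Fin (N+1)) xm = α := by
          simp only [hwdef, reduceIte]
          exact min_eq_left (hαle xm h)
        have hsz : supc z = p xm z / pX xm := hxm
        rw [hmin, hsz]
  have hbase : Finset.univ.sup' Finset.univ_nonempty
      (fun s : X × Fin (N+1) => ∑ z, ∑ x, q' s x z) = α := by
    apply le_antisymm
    · refine Finset.sup'_le _ _ fun s _ => ?_
      have hQs : ∀ z, (∑ x, q' s x z) = w s.2 s.1 * (p s.1 z / pX s.1) :=
        fun z => hQ s.1 s.2 z
      have : (∑ z, ∑ x, q' s x z) = w s.2 s.1 * ∑ z, p s.1 z / pX s.1 := by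
        rw [Finset.mul_sum]
        exact Finset.sum_congr rfl fun z _ => hQs z
      rw [this]
      rcases eq_or_lt_of_le (hpXnn s.1) with h | h
      · have : ∀ z, p s.1 z / pX s.1 = 0 := fun z => hc0 s.1 z h.symm
        simp only [this]
        simp [hα.le]
      · rw [hcond1 s.1 h, mul_one]
        exact hw_le s.2 s.1
    · refine le_trans ?_ (Finset.le_sup'
        (fun s : X × Fin (N+1) => ∑ z, ∑ x, q' s x z) (mem_univ (x₀, 0)))
      have : (∑ z, ∑ x, q' (x₀, (0 : Fin (N+1))) x z) = w 0 x₀ * ∑ z, p x₀ z / pX x₀ := by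
        rw [Finset.mul_sum]
        exact Finset.sum_congr rfl fun z _ => hQ x₀ 0 z
      rw [this, hcond1 x₀ hx₀, mul_one]
      have hmin : w (0 : Fin (N+1)) x₀ = α := by
        simp only [hwdef, reduceIte]
        exact min_eq_left (hαle x₀ hx₀)
      rw [hmin]
  -- infGain of q'
  have hgain : infGain (fun s z => ∑ x, q' s x z) = maxLeak p := by
    rw [infGain, maxLeak, bayesGuessProb_eq_sum_sup, baselineProb_eq_sup]
    have h1 : (∑ z, Finset.univ.sup' Finset.univ_nonempty
        (fun s : X × Fin (N+1) => ∑ x, q' s x z)) = α * ∑ z, supc z := by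
      rw [Finset.mul_sum]
      exact Finset.sum_congr rfl fun z _ => hsupQ z
    rw [h1, hbase, mul_div_cancel_left₀ _ hα.ne']
  -- transport to Fin n
  set n : ℕ := Fintype.card (X × Fin (N+1)) with hndef
  have hn : 0 < n := Fintype.card_pos
  haveI : Nonempty (Fin n) := Fin.pos_iff_nonempty.mp hn
  set e : Fin n ≃ X × Fin (N+1) := (Fintype.equivFin (X × Fin (N+1))).symm with hedef
  refine ⟨n, hn, fun i => q' (e i), ⟨fun s x z => hq'nn (e s) x z, ?_⟩, ?_, ?_, ?_⟩
  · rw [Equiv.sum_comp e (fun s => ∑ x, ∑ z, q' s x z)]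
    exact hq'pmf.2
  · intro s x z
    rw [Equiv.sum_comp e (fun s' => ∑ z', q' s' x z'),
      Equiv.sum_comp e (fun s' => q' s' x z)]
    exact hq'markov (e s) x z
  · intro x z
    rw [Equiv.sum_comp e (fun s => q' s x z)]
    exact hmargq x z
  · rw [infGain_reindex e (fun s z => ∑ x, q' s x z)]
    exact hgain

end Helpers

/-- the supremum, over all random variables S with Markov chain S − X − Z,
of the Bayes inference gain log₂(Pr[S = Ŝ(Z)]/Pr[S = Ŝ]) equals
log₂(∑_z max_{x : P_X(x)>0} P_{Z|X}(z|x)); the supremum is attained. -/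
theorem maximal_leakage_closed_form
    {X Z : Type} [Fintype X] [Fintype Z] [Nonempty X] [Nonempty Z]
    (p : X → Z → ℝ) (hp : IsJointPMF2 p) :
    (∀ (S : Type) [Fintype S] [Nonempty S] (q : S → X → Z → ℝ),
        IsJointPMF3 q → MarkovSXZ q → (∀ x z, ∑ s, q s x z = p x z) →
        infGain (fun s z => ∑ x, q s x z) ≤ maxLeak p) ∧
    (∃ (n : ℕ) (_ : 0 < n) (q : Fin n → X → Z → ℝ),
        IsJointPMF3 q ∧ MarkovSXZ q ∧ (∀ x z, ∑ s, q s x z = p x z) ∧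
        infGain (fun s z => ∑ x, q s x z) = maxLeak p) := by
  constructor
  · intro S _ _ q hq hm hmarg
    exact upper p q hp hq hm hmarg
  · exact achieve p hp
end
end

section
/- The maximally revealing attribute S* satisfies max_{s} P_{S*}(s) = p_min, where p_min = min_x P_X(x), and for each z, max_s P_{S*,Z}(s,z) = p_min · max_x P_{Z|X}(z|x). -/
open scoped BigOperators
noncomputable section

/-- the maximally revealing (shattering) attribute S* on 𝕊 = 𝕏 × ℕ,
given by P_{S*|X}((x',k)|x) = p_min/P_X(x) for x'=x, 1 ≤ k ≤ ⌊r(x)⌋;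
= 1 − (⌈r(x)⌉−1)·p_min/P_X(x) for x'=x, k = ⌈r(x)⌉; = 0 otherwise (r(x) = P_X(x)/p_min),
satisfies max_s P_{S*}(s) = p_min and, for each z (using the Markov chain S* − X − Z),
max_s P_{S*,Z}(s,z) = p_min · max_x P_{Z|X}(z|x). -/
theorem shattering_attribute_properties
    {X Z : Type} [Fintype X] [Fintype Z] [Nonempty X] [Nonempty Z] [DecidableEq X]
    (p : X → Z → ℝ) (hp : IsJointPMF2 p) (hsupp : ∀ x, 0 < ∑ z, p x z)
    (pmin : ℝ) (hpmin : pmin = Finset.univ.inf' Finset.univ_nonempty fun x => ∑ z, p x z)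
    (cond : X × ℕ → X → ℝ)
    (hcond : ∀ x' k x, cond (x', k) x =
      if x' = x ∧ 1 ≤ k ∧ (k : ℤ) ≤ ⌊(∑ z, p x z) / pmin⌋ then pmin / ∑ z, p x z
      else if x' = x ∧ (k : ℤ) = ⌈(∑ z, p x z) / pmin⌉ then
        1 - ((⌈(∑ z, p x z) / pmin⌉ : ℝ) - 1) * pmin / ∑ z, p x z
      else 0) :
    (⨆ s : X × ℕ, ∑ x, cond s x * ∑ z, p x z) = pmin ∧
    ∀ z, (⨆ s : X × ℕ, ∑ x, cond s x * p x z)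
        = pmin * Finset.univ.sup' Finset.univ_nonempty fun x => p x z / ∑ z', p x z' := by
  obtain ⟨hp0, hp1⟩ := hp
  have hPpos : ∀ x, 0 < ∑ z, p x z := hsupp
  have hple : ∀ x, pmin ≤ ∑ z, p x z := fun x => by
    rw [hpmin]; exact Finset.inf'_le _ (Finset.mem_univ x)
  have hpminpos : 0 < pmin := by
    obtain ⟨x0, -, hx0⟩ := Finset.exists_mem_eq_inf'
      Finset.univ_nonempty (fun x : X => ∑ z, p x z)
    rw [hpmin, hx0]; exact hPpos x0
  have key : ∀ w : X → ℝ, (∀ x, 0 ≤ w x) →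
      (⨆ s : X × ℕ, ∑ x, cond s x * w x)
        = pmin * Finset.univ.sup' Finset.univ_nonempty (fun x => w x / ∑ z, p x z) := by
    intro w hw
    set M := Finset.univ.sup' Finset.univ_nonempty (fun x => w x / ∑ z, p x z) with hM
    have hsum : ∀ (x' : X) (k : ℕ), ∑ x, cond (x', k) x * w x = cond (x', k) x' * w x' := by
      intro x' k
      apply Finset.sum_eq_single x'
      · intro x _ hx
        rw [hcond, if_neg, if_neg]
        · ring
        · rintro ⟨h, -⟩; exact hx h.symm
        · rintro ⟨h, -⟩; exact hx h.symm
      · intro h; exact absurd (Finset.mem_univ x') h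
    have hcle : ∀ (x' : X) (k : ℕ), cond (x', k) x' ≤ pmin / ∑ z, p x' z := by
      intro x' k
      have hP := hPpos x'
      rw [hcond]
      split_ifs with h1 h2
      · exact le_refl _
      · have hr : (∑ z, p x' z) ≤ (⌈(∑ z, p x' z) / pmin⌉ : ℝ) * pmin := by
          rw [← div_le_iff₀ hpminpos]
          exact Int.le_ceil _
        rw [sub_le_iff_le_add, ← add_div, le_div_iff₀ hP]
        nlinarith [hr]
      · positivity
    have hub : ∀ s : X × ℕ, ∑ x, cond s x * w x ≤ pmin * M := by
      rintro ⟨x', k⟩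
      rw [hsum]
      calc cond (x', k) x' * w x'
          ≤ (pmin / ∑ z, p x' z) * w x' :=
            mul_le_mul_of_nonneg_right (hcle x' k) (hw x')
        _ = pmin * (w x' / ∑ z, p x' z) := by ring
        _ ≤ pmin * M := by
            apply mul_le_mul_of_nonneg_left _ hpminpos.le
            exact Finset.le_sup' (fun x => w x / ∑ z, p x z) (Finset.mem_univ x')
    obtain ⟨xm, -, hxm⟩ := Finset.exists_mem_eq_sup'
      Finset.univ_nonempty (fun x : X => w x / ∑ z, p x z)
    have hfloor : ((1 : ℕ) : ℤ) ≤ ⌊(∑ z, p xm z) / pmin⌋ := by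
      rw [Int.le_floor]
      push_cast
      rw [le_div_iff₀ hpminpos]
      linarith [hple xm]
    have hval : ∑ x, cond (xm, 1) x * w x = pmin * M := by
      rw [hsum, hcond, if_pos ⟨rfl, le_refl 1, hfloor⟩, hM, hxm]
      ring
    apply le_antisymm
    · exact ciSup_le hub
    · rw [← hval]
      exact le_ciSup ⟨pmin * M, by rintro y ⟨s, rfl⟩; exact hub s⟩ (xm, 1)
  constructor
  · rw [key (fun x => ∑ z, p x z) (fun x => (hPpos x).le)]
    have h1 : (fun x : X => (∑ z, p x z) / ∑ z, p x z) = fun _ => (1 : ℝ) := by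
      funext x; exact div_self (hPpos x).ne'
    rw [h1, Finset.sup'_const, mul_one]
  · intro z
    exact key (fun x => p x z) (fun x => hp0 x z)
end
end

section
/- Bayes-optimal inference gain is bounded by maximal leakage: for any finite random variables S, X, Z with Markov chain S − X − Z and X of full support, log(Pr[S = Ŝ(Z)] / Pr[S = Ŝ]) ≤ log(∑_z max_x P_{Z|X}(z|x)). -/
open scoped BigOperators
noncomputable section

/-- the Bayes-optimal inference gain is bounded by maximal leakage:
for any Markov chain S − X − Z with X of full support,
log₂(Pr[S = Ŝ(Z)]/Pr[S = Ŝ]) ≤ log₂(∑_z max_x P_{Z|X}(z|x)). -/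
theorem inference_gain_le_maximal_leakage
    {S X Z : Type} [Fintype S] [Fintype X] [Fintype Z] [Nonempty S] [Nonempty X] [Nonempty Z]
    (q : S → X → Z → ℝ) (hq : IsJointPMF3 q) (hmc : MarkovSXZ q)
    (hsupp : ∀ x, 0 < ∑ s, ∑ z, q s x z) :
    infGain (fun s z => ∑ x, q s x z) ≤ maxLeak (fun x z => ∑ s, q s x z) := by
  classical
  set p : S → Z → ℝ := fun s z => ∑ x, q s x z with hp
  -- P'(x) : marginal of X
  set P : X → ℝ := fun x => ∑ s, ∑ z, q s x z with hP
  -- D x : denominator in maxLeak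
  have hD : ∀ x, (∑ z', ∑ s, q s x z') = P x := fun x => Finset.sum_comm
  set M : Z → ℝ := fun z =>
    Finset.univ.sup' Finset.univ_nonempty fun x => (∑ s, q s x z) / ∑ z', ∑ s, q s x z' with hM
  have hq0 := hq.1
  have hM0 : ∀ z, 0 ≤ M z := by
    intro z
    have x0 : X := Classical.arbitrary X
    refine le_trans ?_ (Finset.le_sup' _ (Finset.mem_univ x0))
    exact div_nonneg (Finset.sum_nonneg fun s _ => hq.1 s x0 z)
      (Finset.sum_nonneg fun z' _ => Finset.sum_nonneg fun s _ => hq.1 s x0 z')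
  -- PS s : marginal of S
  set PS : S → ℝ := fun s => ∑ z, ∑ x, q s x z with hPS
  have hPS0 : ∀ s, 0 ≤ PS s := by
    intro s; apply Finset.sum_nonneg; intro z _; apply Finset.sum_nonneg; intro x _; exact hq0 s x z
  -- key pointwise bound
  have key : ∀ s z, p s z ≤ M z * PS s := by
    intro s z
    have h1 : ∀ x, q s x z ≤ (∑ z', q s x z') * M z := by
      intro x
      have hPx := hsupp x
      have hmc' := hmc s x z
      have : q s x z = (∑ z', q s x z') * ((∑ s', q s' x z) / P x) := by
        rw [mul_div_assoc', eq_div_iff (ne_of_gt (show 0 < P x from hPx))]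
        exact hmc'
      rw [this]
      apply mul_le_mul_of_nonneg_left _ (Finset.sum_nonneg fun z' _ => hq0 s x z')
      have : (∑ s', q s' x z) / (∑ z', ∑ s', q s' x z') ≤ M z :=
        Finset.le_sup' (fun x => (∑ s', q s' x z) / ∑ z', ∑ s', q s' x z') (Finset.mem_univ x)
      rwa [hD x] at this
    calc p s z ≤ ∑ x, (∑ z', q s x z') * M z := Finset.sum_le_sum fun x _ => h1 x
      _ = M z * PS s := by
          rw [← Finset.sum_mul, hPS]
          rw [Finset.sum_comm]
          ring
  -- baseline B
  set B : ℝ := baselineProb p with hB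
  have hBub : ∀ s, (∑ z, p s z) ≤ B := by
    intro s
    rw [hB, baselineProb]
    exact le_ciSup (f := fun s => ∑ z, p s z) (Set.Finite.bddAbove (Set.finite_range _)) s
  have hPSeq : ∀ s, PS s = ∑ z, p s z := fun s => rfl
  have hBpos : 0 < B := by
    have hsum : ∑ s, PS s = 1 := by
      rw [← hq.2]
      rw [hPS]
      apply Finset.sum_congr rfl
      intro s _
      exact Finset.sum_comm
    have : ∃ s ∈ Finset.univ, (0:ℝ) < PS s := by
      by_contra h
      push_neg at h
      have : ∑ s, PS s ≤ 0 := Finset.sum_nonpos fun s hs => h s hs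
      linarith
    obtain ⟨s, _, hs⟩ := this
    exact lt_of_lt_of_le hs (by rw [hPSeq s] at hs ⊢; exact hBub s)
  -- L' := sum of M
  set L : ℝ := ∑ z, M z with hL
  have hL1 : (1:ℝ) ≤ L := by
    have x0 : X := Classical.arbitrary X
    have hPx0 : 0 < P x0 := hsupp x0
    have : (1:ℝ) = ∑ z, (∑ s, q s x0 z) / ∑ z', ∑ s, q s x0 z' := by
      rw [← Finset.sum_div, hD x0, div_self (ne_of_gt hPx0)]
    rw [this]
    apply Finset.sum_le_sum
    intro z _
    exact Finset.le_sup' (fun x => (∑ s, q s x z) / ∑ z', ∑ s, q s x z') (Finset.mem_univ x0)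
  -- bayes bound
  have hbayes : bayesGuessProb p ≤ L * B := by
    apply ciSup_le
    intro g
    calc ∑ z, p (g z) z ≤ ∑ z, M z * PS (g z) := Finset.sum_le_sum fun z _ => key (g z) z
      _ ≤ ∑ z, M z * B := by
          apply Finset.sum_le_sum
          intro z _
          exact mul_le_mul_of_nonneg_left (by rw [hPSeq]; exact hBub (g z)) (hM0 z)
      _ = L * B := by rw [← Finset.sum_mul]
  have hbayesB : B ≤ bayesGuessProb p := by
    apply ciSup_le
    intro s
    exact le_ciSup (Set.Finite.bddAbove (Set.finite_range fun g : Z → S => ∑ z, p (g z) z))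
      (fun _ => s)
  have hbayespos : 0 < bayesGuessProb p := lt_of_lt_of_le hBpos hbayesB
  show Real.logb 2 (bayesGuessProb p / B) ≤ Real.logb 2 L
  apply Real.logb_le_logb_of_le one_lt_two (div_pos hbayespos hBpos)
  rw [div_le_iff₀ hBpos]
  exact hbayes
end
end
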